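/- arXiv:2512.19230 — 4 statements merged into one kernel-verified Lean document; each statement's English description precedes it below -/
import Mathlib

section
/- Let f(·|x) be a conditional Lebesgue density of T given X = x on ℝ, and g: 𝒳 → ℝ measurable. Define B_n = {(t,x) : |t - g(x)| ≤ 1/n} and c_n = ∫ P(T ∈ [g(x)-1/n, g(x)+1/n] | X=x) dF_X(x). If c_n > 0 for all n, then the functions h_n(t,x) = 1{(t,x) ∈ B_n}/√c_n satisfy ‖h_n‖_{L²(P_{T,X})} = 1 while E[h_n(g(X), X)] = 1/√c_n → ∞ as n → ∞ (since c_n → 0 by dominated convergence). -/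
/-!
The events `{|T - g X| ≤ 1/n}` decrease to the graph event `{T = g X}`, which is null because `T`
has a Lebesgue density given `X`: the graph of `g` meets each fibre `ℝ × {x}` in a single point.
So `c n → 0`, while `h n` has unit norm in `L²(P_{T,X})` and takes the value `1 / √(c n)` on
the graph of `g`.
-/

open MeasureTheory ProbabilityTheory Filter Topology Set

section

variable {Ω 𝒳 : Type*} [MeasurableSpace Ω] [MeasurableSpace 𝒳] {μ : Measure Ω}

def HasCondDensity (μ : Measure Ω) (T : Ω → ℝ) (X : Ω → 𝒳) (f : ℝ → 𝒳 → ℝ) : Prop :=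
  ∀ G : ℝ → 𝒳 → ℝ, Measurable (Function.uncurry G) → (∃ C, ∀ t x, |G t x| ≤ C) →
    ∫ ω, G (T ω) (X ω) ∂μ = ∫ ω, ∫ t, G t (X ω) * f t (X ω) ∂(volume : Measure ℝ) ∂μ

theorem HasCondDensity.measure_graph_eq_zero [IsFiniteMeasure μ] {T : Ω → ℝ} {X : Ω → 𝒳}
    {f : ℝ → 𝒳 → ℝ} (hdens : HasCondDensity μ T X f) (hT : Measurable T) (hX : Measurable X)
    {g : 𝒳 → ℝ} (hg : Measurable g) :
    μ {ω | T ω = g (X ω)} = 0 := by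
  set G : ℝ → 𝒳 → ℝ := fun t x => if t = g x then 1 else 0
  have hG : Measurable (Function.uncurry G) :=
    Measurable.ite (measurableSet_eq_fun measurable_fst (hg.comp measurable_snd))
      measurable_const measurable_const
  have hbdd : ∃ C, ∀ t x, |G t x| ≤ C := ⟨1, fun t x => by unfold G; split_ifs <;> simp⟩
  have hinner : ∀ x, ∫ t, G t x * f t x = 0 := fun x =>
    integral_eq_zero_of_ae <|
      measure_mono_null (fun t ht => by simp_all [G]) (measure_singleton (g x))
  have key := hdens G hG hbdd
  simp only [hinner, integral_zero] at key
  have hindicator : (fun ω => G (T ω) (X ω)) = {ω | T ω = g (X ω)}.indicator 1 :=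
    funext fun ω => by simp [G, indicator_apply]
  have hset : MeasurableSet {ω | T ω = g (X ω)} := measurableSet_eq_fun hT (hg.comp hX)
  rwa [hindicator, integral_indicator_one hset, measureReal_eq_zero_iff] at key

theorem tendsto_measure_abs_le_one_div [IsFiniteMeasure μ] {Y : Ω → ℝ} (hY : Measurable Y) :
    Tendsto (fun n : ℕ => μ {ω | |Y ω| ≤ 1 / n}) atTop (𝓝 (μ {ω | Y ω = 0})) := by
  have hgt := tendsto_measure_biInter_gt (μ := μ) (s := fun r : ℝ => {ω | |Y ω| ≤ r}) (a := 0)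
    (fun r _ => (measurableSet_le hY.abs measurable_const).nullMeasurableSet)
    (fun i j _ hij ω hω => le_trans hω hij) ⟨1, one_pos, measure_ne_top μ _⟩
  have hInter : ⋂ r > (0 : ℝ), {ω | |Y ω| ≤ r} = {ω | Y ω = 0} := by
    ext ω
    simp only [mem_iInter, mem_ofPred_eq]
    rw [forall_gt_imp_ge_iff_le_of_dense, abs_nonpos_iff]
  rw [hInter] at hgt
  have hinv : Tendsto (fun n : ℕ => 1 / (n : ℝ)) atTop (𝓝[>] 0) := by
    simpa only [one_div, Function.comp_def] using
      tendsto_inv_atTop_nhdsGT_zero.comp tendsto_natCast_atTop_atTop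
  exact hgt.comp hinv

theorem tendsto_one_div_sqrt_atTop_of_tendsto_zero {ι : Type*} {l : Filter ι} {c : ι → ℝ}
    (hc : Tendsto c l (𝓝 0)) (hpos : ∀ᶠ i in l, 0 < c i) :
    Tendsto (fun i => 1 / √(c i)) l atTop := by
  have hsqrt : Tendsto (fun i => √(c i)) l (𝓝[>] 0) :=
    tendsto_nhdsWithin_of_tendsto_nhds_of_eventually_within _
      (by simpa using hc.sqrt)
      (hpos.mono fun i hi => Real.sqrt_pos.2 hi)
  simpa only [one_div, Pi.inv_def] using hsqrt.inv_tendsto_nhdsGT_zero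

theorem integral_sq_indicator_one_div_sqrt_measureReal [IsFiniteMeasure μ] {s : Set Ω}
    (hs : MeasurableSet s) (hpos : 0 < μ.real s) :
    ∫ ω, (s.indicator (fun _ => 1 / √(μ.real s)) ω) ^ 2 ∂μ = 1 := by
  have hsq : ∀ ω, (s.indicator (fun _ => 1 / √(μ.real s)) ω) ^ 2
      = s.indicator (fun _ => (μ.real s)⁻¹) ω := fun ω => by
    by_cases h : ω ∈ s <;> simp [h, Real.sq_sqrt hpos.le]
  simp_rw [hsq, integral_indicator_const _ hs, smul_eq_mul, mul_inv_cancel₀ hpos.ne']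

end

theorem deterministic_welfare_unbounded_functional_general
    {Ω 𝒳 : Type*} [MeasurableSpace Ω] [MeasurableSpace 𝒳]
    (μ : Measure Ω) [IsProbabilityMeasure μ]
    (T : Ω → ℝ) (X : Ω → 𝒳) (hT : Measurable T) (hX : Measurable X)
    (g : 𝒳 → ℝ) (hg : Measurable g)
    (f : ℝ → 𝒳 → ℝ)
    -- `f(·|x)` is the conditional Lebesgue density of `T` given `X = x`:
    (hdens : ∀ G : ℝ → 𝒳 → ℝ, Measurable (Function.uncurry G) →
      (∃ C, ∀ t x, |G t x| ≤ C) →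
      ∫ ω, G (T ω) (X ω) ∂μ
        = ∫ ω, ∫ t, G t (X ω) * f t (X ω) ∂(volume : Measure ℝ) ∂μ)
    (c : ℕ → ℝ)
    (hc : ∀ n : ℕ, c n = (μ {ω | |T ω - g (X ω)| ≤ 1 / (n : ℝ)}).toReal)
    (hcpos : ∀ n : ℕ, 1 ≤ n → 0 < c n)
    (h : ℕ → ℝ → 𝒳 → ℝ)
    (hdef : ∀ (n : ℕ) (t : ℝ) (x : 𝒳),
      h n t x = (if |t - g x| ≤ 1 / (n : ℝ) then (1 : ℝ) else 0) / Real.sqrt (c n)) :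
    (∀ n : ℕ, 1 ≤ n → ∫ ω, (h n (T ω) (X ω)) ^ 2 ∂μ = 1) ∧
    (∀ n : ℕ, 1 ≤ n → ∫ ω, h n (g (X ω)) (X ω) ∂μ = 1 / Real.sqrt (c n)) ∧
    Tendsto (fun n => ∫ ω, h n (g (X ω)) (X ω) ∂μ) atTop atTop := by
  set A : ℕ → Set Ω := fun n => {ω | |T ω - g (X ω)| ≤ 1 / (n : ℝ)}
  have hcA : ∀ n, c n = μ.real (A n) := hc
  have hA : ∀ n, MeasurableSet (A n) := fun n =>
    measurableSet_le (hT.sub (hg.comp hX)).abs measurable_const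
  have hhT : ∀ n ω, h n (T ω) (X ω) = (A n).indicator (fun _ => 1 / √(c n)) ω := fun n ω => by
    simp only [hdef, indicator_apply, A, mem_ofPred_eq]
    split_ifs <;> simp
  have hhg : ∀ n ω, h n (g (X ω)) (X ω) = 1 / √(c n) := fun n ω => by
    simp [hdef]
  have hc0 : Tendsto c atTop (𝓝 0) := by
    have hmeas := tendsto_measure_abs_le_one_div (μ := μ) (hT.sub (hg.comp hX))
    simp only [Pi.sub_apply, Function.comp_apply, sub_eq_zero,
      HasCondDensity.measure_graph_eq_zero hdens hT hX hg] at hmeas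
    exact ((ENNReal.tendsto_toReal ENNReal.zero_ne_top).comp hmeas).congr fun n => (hc n).symm
  refine ⟨fun n hn => ?_, fun n _ => by simp [hhg], ?_⟩
  · simp_rw [hhT, hcA]
    exact integral_sq_indicator_one_div_sqrt_measureReal (hA n) (hcA n ▸ hcpos n hn)
  · simp_rw [hhg, integral_const, probReal_univ, one_smul]
    exact tendsto_one_div_sqrt_atTop_of_tendsto_zero hc0 (eventually_atTop.2 ⟨1, hcpos⟩)

/-- Non-pathwise-differentiability construction: if `T | X = x` has a Lebesgue density
`f(·|x)`, `B_n = {(t,x) : |t - g(x)| ≤ 1/n}` and `c_n = P(|T - g(X)| ≤ 1/n) > 0`, then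
`h_n(t,x) = 1{(t,x) ∈ B_n}/√c_n` has unit `L²(P_{T,X})` norm while
`E[h_n(g(X),X)] = 1/√c_n → ∞`. -/
theorem deterministic_welfare_unbounded_functional
    {Ω 𝒳 : Type*} [MeasurableSpace Ω] [MeasurableSpace 𝒳]
    (μ : Measure Ω) [IsProbabilityMeasure μ]
    (T : Ω → ℝ) (X : Ω → 𝒳) (hT : Measurable T) (hX : Measurable X)
    (g : 𝒳 → ℝ) (hg : Measurable g)
    (f : ℝ → 𝒳 → ℝ) (hf : Measurable (Function.uncurry f))
    -- `f(·|x)` is the conditional Lebesgue density of `T` given `X = x`: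
    (hdens : ∀ G : ℝ → 𝒳 → ℝ, Measurable (Function.uncurry G) →
      (∃ C, ∀ t x, |G t x| ≤ C) →
      ∫ ω, G (T ω) (X ω) ∂μ
        = ∫ ω, ∫ t, G t (X ω) * f t (X ω) ∂(volume : Measure ℝ) ∂μ)
    (c : ℕ → ℝ)
    (hc : ∀ n : ℕ, c n = (μ {ω | |T ω - g (X ω)| ≤ 1 / (n : ℝ)}).toReal)
    (hcpos : ∀ n : ℕ, 1 ≤ n → 0 < c n)
    (h : ℕ → ℝ → 𝒳 → ℝ)
    (hdef : ∀ (n : ℕ) (t : ℝ) (x : 𝒳),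
      h n t x = (if |t - g x| ≤ 1 / (n : ℝ) then (1 : ℝ) else 0) / Real.sqrt (c n)) :
    (∀ n : ℕ, 1 ≤ n → ∫ ω, (h n (T ω) (X ω)) ^ 2 ∂μ = 1) ∧
    (∀ n : ℕ, 1 ≤ n → ∫ ω, h n (g (X ω)) (X ω) ∂μ = 1 / Real.sqrt (c n)) ∧
    Tendsto (fun n => ∫ ω, h n (g (X ω)) (X ω) ∂μ) atTop atTop :=
  deterministic_welfare_unbounded_functional_general μ T X hT hX g hg f hdens c hc hcpos h hdef
end

section
/- Let X be a random variable (covariate), T ∈ {0,1} with P(T=1|X)=p(X) ∈ (0,1), Y bounded, m_t(x)=E[Y|T=t,X=x], ω₁=1/p, ω₀=1/(1-p). Define τ_tp = ω₁(X)TY - ω₀(X)(1-T)Y and τ_ep = ω₁(X)T(Y-m₁(X)) - ω₀(X)(1-T)(Y-m₀(X)) + m₁(X) - m₀(X). Then E[τ_tp | X] = E[τ_ep | X] = m₁(X) - m₀(X) a.s. and E[τ_ep² | X] ≤ E[τ_tp² | X] a.s. -/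
open MeasureTheory ProbabilityTheory
open scoped ENNReal

/-!
Write `ε₁ = T (Y - m₁(X))`, `ε₀ = (1 - T) (Y - m₀(X))` and `ε = T - p(X)`. Each has conditional
mean zero given `X`, and so has every combination of them with bounded `X`-measurable
coefficients. Now `τ_ep = m₁ - m₀ + ε₁ / p - ε₀ / (1 - p)` and
`τ_tp = τ_ep + (m₁ / p + m₀ / (1 - p)) ε`, which gives both conditional means. Since `T² = T`,
`ε τ_ep = ((1 - p) / p) ε₁ + (p / (1 - p)) ε₀ + (m₁ - m₀) ε` has conditional mean zero as well,
so `τ_tp - τ_ep` is conditionally orthogonal to `τ_ep` and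
`E[τ_tp² | X] = E[τ_ep² | X] + E[(τ_tp - τ_ep)² | X] ≥ E[τ_ep² | X]`.
-/

section

variable {Ω : Type*} {m mΩ : MeasurableSpace Ω} {μ : Measure Ω}

theorem MeasureTheory.MemLp.of_mul_left {c f : Ω → ℝ} (hc : MemLp c⁻¹ ∞ μ)
    (hc₀ : ∀ ω, c ω ≠ 0) (hcf : MemLp (c * f) ∞ μ) : MemLp f ∞ μ := by
  have h : c⁻¹ * (c * f) = f := by
    ext ω
    simp [hc₀ ω]
  simpa only [h] using hcf.mul hc

def CondMeanZero (m : MeasurableSpace Ω) (μ : Measure[mΩ] Ω) (g : Ω → ℝ) : Prop :=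
  Integrable g μ ∧ μ[g | m] =ᵐ[μ] 0

namespace CondMeanZero

variable {f g : Ω → ℝ}

theorem add (hf : CondMeanZero m μ f) (hg : CondMeanZero m μ g) : CondMeanZero m μ (f + g) :=
  ⟨hf.1.add hg.1, by
    filter_upwards [condExp_add hf.1 hg.1 m, hf.2, hg.2] with ω h hf₀ hg₀
    simp [h, hf₀, hg₀]⟩

theorem sub (hf : CondMeanZero m μ f) (hg : CondMeanZero m μ g) : CondMeanZero m μ (f - g) :=
  ⟨hf.1.sub hg.1, by
    filter_upwards [condExp_sub hf.1 hg.1 m, hf.2, hg.2] with ω h hf₀ hg₀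
    simp [h, hf₀, hg₀]⟩

theorem mul_left (hg : CondMeanZero m μ g) (hf : Measurable[m] f) (hf' : MemLp f ∞ μ) :
    CondMeanZero m μ (f * g) :=
  ⟨hg.1.mul_of_top_right hf', by
    filter_upwards [condExp_mul_of_stronglyMeasurable_left hf.stronglyMeasurable
      (hg.1.mul_of_top_right hf') hg.1, hg.2] with ω h h₀
    simp [h, h₀]⟩

theorem condExp_add_left (hg : CondMeanZero m μ g) (hf : Integrable f μ) :
    μ[f + g | m] =ᵐ[μ] μ[f | m] := by
  filter_upwards [condExp_add hf hg.1 m, hg.2] with ω h h₀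
  simp [h, h₀]

end CondMeanZero

theorem condMeanZero_mul_sub {g Y c M : Ω → ℝ} (hM : Measurable[m] M) (hM' : MemLp M ∞ μ)
    (hg : Integrable g μ) (hgY : Integrable (g * Y) μ) (hc : μ[g | m] =ᵐ[μ] c)
    (hcM : μ[g * Y | m] =ᵐ[μ] c * M) : CondMeanZero m μ (g * (Y - M)) := by
  have hMg : Integrable (M * g) μ := hg.mul_of_top_right hM'
  have hsplit : g * (Y - M) = g * Y - M * g := by ring
  refine ⟨hsplit ▸ hgY.sub hMg, ?_⟩
  rw [hsplit]
  filter_upwards [condExp_sub hgY hMg m,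
    condExp_mul_of_stronglyMeasurable_left hM.stronglyMeasurable hMg hg, hc, hcM]
    with ω h₁ h₂ h₃ h₄
  simp only [Pi.sub_apply, Pi.mul_apply, Pi.zero_apply] at h₁ h₂ h₃ h₄ ⊢
  rw [h₁, h₂, h₃, h₄]
  ring

theorem condExp_sq_le_condExp_sq_add {f g : Ω → ℝ} (hf : MemLp f 2 μ) (hg : MemLp g 2 μ)
    (hfg : μ[f * g | m] =ᵐ[μ] 0) :
    μ[fun ω => f ω ^ 2 | m] ≤ᵐ[μ] μ[fun ω => (f ω + g ω) ^ 2 | m] := by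
  have hexpand : (fun ω => (f ω + g ω) ^ 2) =
      (fun ω => f ω ^ 2) + (2 : ℝ) • (f * g) + fun ω => g ω ^ 2 := by
    ext ω; simp only [Pi.add_apply, Pi.smul_apply, Pi.mul_apply, smul_eq_mul]; ring
  have hf2 := hf.integrable_sq
  have hfg' := (hf.integrable_mul hg).smul (2 : ℝ)
  rw [hexpand]
  filter_upwards [condExp_add (hf2.add hfg') hg.integrable_sq m, condExp_add hf2 hfg' m,
    condExp_smul (2 : ℝ) (f * g) m, hfg,
    condExp_nonneg (m := m) (ae_of_all μ fun ω => sq_nonneg (g ω))] with ω h₁ h₂ h₃ h₄ h₅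
  simp only [Pi.add_apply, Pi.smul_apply, Pi.zero_apply, smul_eq_mul] at h₁ h₂ h₃ h₄ h₅ ⊢
  rw [h₁, h₂, h₃, h₄]
  linarith

noncomputable def ipwScore (P T Y : Ω → ℝ) : Ω → ℝ := fun ω =>
  (1 / P ω) * T ω * Y ω - (1 / (1 - P ω)) * (1 - T ω) * Y ω

noncomputable def aipwScore (P M₁ M₀ T Y : Ω → ℝ) : Ω → ℝ := fun ω =>
  (1 / P ω) * T ω * (Y ω - M₁ ω) - (1 / (1 - P ω)) * (1 - T ω) * (Y ω - M₀ ω) + M₁ ω - M₀ ω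

theorem aipwScore_eq (P M₁ M₀ T Y : Ω → ℝ) : aipwScore P M₁ M₀ T Y =
    (M₁ - M₀) + (P⁻¹ * (T * (Y - M₁)) - (1 - P)⁻¹ * ((1 - T) * (Y - M₀))) := by
  ext ω
  simp only [aipwScore, Pi.add_apply, Pi.sub_apply, Pi.mul_apply, Pi.inv_apply, Pi.one_apply]
  ring

noncomputable def ipwCorrectionCoeff (P M₁ M₀ : Ω → ℝ) : Ω → ℝ := P⁻¹ * M₁ + (1 - P)⁻¹ * M₀

theorem ipwScore_eq {P T : Ω → ℝ} (M₁ M₀ Y : Ω → ℝ) (hP : ∀ ω, P ω ≠ 0)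
    (hP' : ∀ ω, 1 - P ω ≠ 0) : ipwScore P T Y =
    aipwScore P M₁ M₀ T Y + ipwCorrectionCoeff P M₁ M₀ * (T - P) := by
  ext ω
  simp only [ipwScore, aipwScore, ipwCorrectionCoeff, Pi.add_apply, Pi.sub_apply, Pi.mul_apply,
    Pi.inv_apply, Pi.one_apply]
  field_simp [hP ω, hP' ω]
  ring

theorem sub_mul_aipwScore {P T : Ω → ℝ} (M₁ M₀ Y : Ω → ℝ) (hT : ∀ ω, T ω = 0 ∨ T ω = 1) :
    (T - P) * aipwScore P M₁ M₀ T Y = (1 - P) * P⁻¹ * (T * (Y - M₁))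
      + P * (1 - P)⁻¹ * ((1 - T) * (Y - M₀)) + (M₁ - M₀) * (T - P) := by
  ext ω
  simp only [aipwScore, Pi.add_apply, Pi.sub_apply, Pi.mul_apply, Pi.inv_apply, Pi.one_apply]
  rcases hT ω with h | h <;> simp only [h] <;> ring

/-- `m` is the information carried by the covariates, and `P`, `M₁`, `M₀` stand for `p(X)`,
`m₁(X)`, `m₀(X)`. -/
structure BinaryTreatmentModel (m : MeasurableSpace Ω) (μ : Measure[mΩ] Ω)
    (T Y P M₁ M₀ : Ω → ℝ) : Prop where
  le : m ≤ mΩ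
  aestronglyMeasurable_T : AEStronglyMeasurable[mΩ] T μ
  binary : ∀ ω, T ω = 0 ∨ T ω = 1
  memLp_Y : MemLp Y ∞ μ
  measurable_P : Measurable[m] P
  measurable_M₁ : Measurable[m] M₁
  measurable_M₀ : Measurable[m] M₀
  exists_bound : ∃ δ > 0, ∀ ω, δ ≤ P ω ∧ P ω ≤ 1 - δ
  condExp_T : μ[T | m] =ᵐ[μ] P
  condExp_T_mul_Y : μ[T * Y | m] =ᵐ[μ] P * M₁
  condExp_one_sub_T_mul_Y : μ[(1 - T) * Y | m] =ᵐ[μ] (1 - P) * M₀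

namespace BinaryTreatmentModel

variable {T Y P M₁ M₀ : Ω → ℝ}

theorem P_pos (h : BinaryTreatmentModel m μ T Y P M₁ M₀) (ω : Ω) : 0 < P ω := by
  obtain ⟨δ, hδ, hP⟩ := h.exists_bound
  linarith [hP ω]

theorem one_sub_P_pos (h : BinaryTreatmentModel m μ T Y P M₁ M₀) (ω : Ω) : 0 < 1 - P ω := by
  obtain ⟨δ, hδ, hP⟩ := h.exists_bound
  linarith [hP ω]

theorem memLp_T (h : BinaryTreatmentModel m μ T Y P M₁ M₀) : MemLp T ∞ μ :=
  memLp_top_of_bound h.aestronglyMeasurable_T 1 <| ae_of_all _ fun ω => by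
    rcases h.binary ω with hT | hT <;> simp [hT]

theorem memLp_P (h : BinaryTreatmentModel m μ T Y P M₁ M₀) : MemLp P ∞ μ :=
  memLp_top_of_bound (h.measurable_P.mono h.le le_rfl).aestronglyMeasurable 1 <|
    ae_of_all _ fun ω => by
      rw [Real.norm_of_nonneg (h.P_pos ω).le]
      linarith [h.one_sub_P_pos ω]

theorem memLp_inv (h : BinaryTreatmentModel m μ T Y P M₁ M₀) : MemLp P⁻¹ ∞ μ := by
  obtain ⟨δ, hδ, hP⟩ := h.exists_bound
  refine memLp_top_of_bound (h.measurable_P.inv.mono h.le le_rfl).aestronglyMeasurable δ⁻¹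
    (ae_of_all _ fun ω => ?_)
  rw [Pi.inv_apply, norm_inv, Real.norm_of_nonneg (h.P_pos ω).le]
  exact inv_anti₀ hδ (hP ω).1

theorem memLp_one_sub_inv (h : BinaryTreatmentModel m μ T Y P M₁ M₀) :
    MemLp (1 - P)⁻¹ ∞ μ := by
  obtain ⟨δ, hδ, hP⟩ := h.exists_bound
  refine memLp_top_of_bound
    ((measurable_const.sub h.measurable_P).inv.mono h.le le_rfl).aestronglyMeasurable δ⁻¹
    (ae_of_all _ fun ω => ?_)
  rw [Pi.inv_apply, norm_inv, Pi.sub_apply, Pi.one_apply,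
    Real.norm_of_nonneg (h.one_sub_P_pos ω).le]
  exact inv_anti₀ hδ (by linarith [hP ω])

theorem memLp_M₁ (h : BinaryTreatmentModel m μ T Y P M₁ M₀) : MemLp M₁ ∞ μ :=
  h.memLp_inv.of_mul_left (fun ω => (h.P_pos ω).ne') <|
    ((h.memLp_Y.mul h.memLp_T).condExp le_top).ae_eq h.condExp_T_mul_Y

theorem memLp_M₀ (h : BinaryTreatmentModel m μ T Y P M₁ M₀) : MemLp M₀ ∞ μ :=
  h.memLp_one_sub_inv.of_mul_left (fun ω => (h.one_sub_P_pos ω).ne') <|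
    ((h.memLp_Y.mul (memLp_top_const 1 |>.sub h.memLp_T)).condExp le_top).ae_eq
      h.condExp_one_sub_T_mul_Y

theorem memLp_aipwScore (h : BinaryTreatmentModel m μ T Y P M₁ M₀) :
    MemLp (aipwScore P M₁ M₀ T Y) ∞ μ := by
  rw [aipwScore_eq]
  exact (h.memLp_M₁.sub h.memLp_M₀).add
    ((((h.memLp_Y.sub h.memLp_M₁).mul (r := ∞) h.memLp_T).mul h.memLp_inv).sub
      (((h.memLp_Y.sub h.memLp_M₀).mul (r := ∞) (memLp_top_const 1 |>.sub h.memLp_T)).mul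
        h.memLp_one_sub_inv))

theorem measurable_ipwCorrectionCoeff (h : BinaryTreatmentModel m μ T Y P M₁ M₀) :
    Measurable[m] (ipwCorrectionCoeff P M₁ M₀) :=
  (h.measurable_P.inv.mul h.measurable_M₁).add
    ((measurable_const.sub h.measurable_P).inv.mul h.measurable_M₀)

theorem memLp_ipwCorrectionCoeff (h : BinaryTreatmentModel m μ T Y P M₁ M₀) :
    MemLp (ipwCorrectionCoeff P M₁ M₀) ∞ μ :=
  (h.memLp_M₁.mul h.memLp_inv).add (h.memLp_M₀.mul h.memLp_one_sub_inv)

theorem ipwScore_eq_aipwScore_add (h : BinaryTreatmentModel m μ T Y P M₁ M₀) :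
    ipwScore P T Y = aipwScore P M₁ M₀ T Y + ipwCorrectionCoeff P M₁ M₀ * (T - P) :=
  ipwScore_eq M₁ M₀ Y (fun ω => (h.P_pos ω).ne') (fun ω => (h.one_sub_P_pos ω).ne')

variable [IsFiniteMeasure μ]

theorem condMeanZero_T_sub_P (h : BinaryTreatmentModel m μ T Y P M₁ M₀) :
    CondMeanZero m μ (T - P) := by
  have hP : Integrable P μ := h.memLp_P.integrable le_top
  refine ⟨(h.memLp_T.integrable le_top).sub hP, ?_⟩
  filter_upwards [condExp_sub (h.memLp_T.integrable le_top) hP m, h.condExp_T] with ω h₁ h₂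
  rw [h₁, Pi.sub_apply, h₂,
    condExp_of_stronglyMeasurable h.le h.measurable_P.stronglyMeasurable hP]
  simp

theorem condExp_one_sub_T (h : BinaryTreatmentModel m μ T Y P M₁ M₀) :
    μ[1 - T | m] =ᵐ[μ] 1 - P := by
  filter_upwards [condExp_sub (integrable_const (1 : ℝ)) (h.memLp_T.integrable le_top) m,
    h.condExp_T] with ω h₁ h₂
  rw [Pi.one_def, h₁, Pi.sub_apply, condExp_const h.le, h₂]
  rfl

theorem condMeanZero_treated (h : BinaryTreatmentModel m μ T Y P M₁ M₀) :
    CondMeanZero m μ (T * (Y - M₁)) :=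
  condMeanZero_mul_sub h.measurable_M₁ h.memLp_M₁ (h.memLp_T.integrable le_top)
    ((h.memLp_Y.mul h.memLp_T).integrable le_top) h.condExp_T h.condExp_T_mul_Y

theorem condMeanZero_control (h : BinaryTreatmentModel m μ T Y P M₁ M₀) :
    CondMeanZero m μ ((1 - T) * (Y - M₀)) :=
  condMeanZero_mul_sub h.measurable_M₀ h.memLp_M₀
    ((memLp_top_const 1 |>.sub h.memLp_T).integrable le_top)
    ((h.memLp_Y.mul (memLp_top_const 1 |>.sub h.memLp_T)).integrable le_top)
    h.condExp_one_sub_T h.condExp_one_sub_T_mul_Y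

theorem condMeanZero_aipwScore_sub (h : BinaryTreatmentModel m μ T Y P M₁ M₀) :
    CondMeanZero m μ (P⁻¹ * (T * (Y - M₁)) - (1 - P)⁻¹ * ((1 - T) * (Y - M₀))) :=
  (h.condMeanZero_treated.mul_left h.measurable_P.inv h.memLp_inv).sub
    (h.condMeanZero_control.mul_left (measurable_const.sub h.measurable_P).inv
      h.memLp_one_sub_inv)

theorem condExp_aipwScore (h : BinaryTreatmentModel m μ T Y P M₁ M₀) :
    μ[aipwScore P M₁ M₀ T Y | m] =ᵐ[μ] M₁ - M₀ := by
  have hM : Integrable (M₁ - M₀) μ := (h.memLp_M₁.sub h.memLp_M₀).integrable le_top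
  rw [aipwScore_eq]
  exact (h.condMeanZero_aipwScore_sub.condExp_add_left hM).trans <| .of_eq <|
    condExp_of_stronglyMeasurable h.le
      (h.measurable_M₁.sub h.measurable_M₀).stronglyMeasurable hM

theorem condMeanZero_ipwCorrection (h : BinaryTreatmentModel m μ T Y P M₁ M₀) :
    CondMeanZero m μ (ipwCorrectionCoeff P M₁ M₀ * (T - P)) :=
  h.condMeanZero_T_sub_P.mul_left h.measurable_ipwCorrectionCoeff h.memLp_ipwCorrectionCoeff

theorem condExp_ipwScore (h : BinaryTreatmentModel m μ T Y P M₁ M₀) :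
    μ[ipwScore P T Y | m] =ᵐ[μ] M₁ - M₀ := by
  rw [h.ipwScore_eq_aipwScore_add]
  exact (h.condMeanZero_ipwCorrection.condExp_add_left
    (h.memLp_aipwScore.integrable le_top)).trans h.condExp_aipwScore

theorem condMeanZero_aipwScore_mul_ipwCorrection (h : BinaryTreatmentModel m μ T Y P M₁ M₀) :
    CondMeanZero m μ (aipwScore P M₁ M₀ T Y * (ipwCorrectionCoeff P M₁ M₀ * (T - P))) := by
  have hcomm : aipwScore P M₁ M₀ T Y * (ipwCorrectionCoeff P M₁ M₀ * (T - P)) =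
      ipwCorrectionCoeff P M₁ M₀ * ((T - P) * aipwScore P M₁ M₀ T Y) := by ring
  rw [hcomm, sub_mul_aipwScore M₁ M₀ Y h.binary]
  refine (((h.condMeanZero_treated.mul_left ?_ ?_).add
    (h.condMeanZero_control.mul_left ?_ ?_)).add
    (h.condMeanZero_T_sub_P.mul_left ?_ ?_)).mul_left h.measurable_ipwCorrectionCoeff
      h.memLp_ipwCorrectionCoeff
  · exact (measurable_const.sub h.measurable_P).mul h.measurable_P.inv
  · exact h.memLp_inv.mul (memLp_top_const 1 |>.sub h.memLp_P)
  · exact h.measurable_P.mul (measurable_const.sub h.measurable_P).inv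
  · exact h.memLp_one_sub_inv.mul h.memLp_P
  · exact h.measurable_M₁.sub h.measurable_M₀
  · exact h.memLp_M₁.sub h.memLp_M₀

theorem condExp_aipwScore_sq_le (h : BinaryTreatmentModel m μ T Y P M₁ M₀) :
    μ[fun ω => aipwScore P M₁ M₀ T Y ω ^ 2 | m] ≤ᵐ[μ] μ[fun ω => ipwScore P T Y ω ^ 2 | m] := by
  rw [h.ipwScore_eq_aipwScore_add]
  exact condExp_sq_le_condExp_sq_add (h.memLp_aipwScore.mono_exponent le_top)
    (((h.memLp_T.sub h.memLp_P).mul (r := ∞) h.memLp_ipwCorrectionCoeff).mono_exponent le_top)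
    h.condMeanZero_aipwScore_mul_ipwCorrection.2

end BinaryTreatmentModel

end

/-- In the binary-treatment setting with propensity `p(X)` bounded away from `0` and `1` and
bounded outcome `Y`, the true-propensity score `τ_tp = ω₁(X)TY - ω₀(X)(1-T)Y` and the
efficient score `τ_ep = ω₁(X)T(Y-m₁(X)) - ω₀(X)(1-T)(Y-m₀(X)) + m₁(X) - m₀(X)` satisfy
`E[τ_tp | X] = E[τ_ep | X] = m₁(X) - m₀(X)` a.s. and `E[τ_ep² | X] ≤ E[τ_tp² | X]` a.s. -/
theorem binary_scores_conditional_moments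
    {Ω 𝒳 : Type*} [MeasurableSpace Ω] [MeasurableSpace 𝒳]
    (μ : Measure Ω) [IsProbabilityMeasure μ]
    (X : Ω → 𝒳) (T Y : Ω → ℝ)
    (hX : Measurable X) (hT : Measurable T) (hY : Measurable Y)
    (hTbin : ∀ ω, T ω = 0 ∨ T ω = 1)
    (M : ℝ) (hYbd : ∀ ω, |Y ω| ≤ M)
    (p m1 m0 : 𝒳 → ℝ) (hpmeas : Measurable p)
    (hm1meas : Measurable m1) (hm0meas : Measurable m0)
    (δ : ℝ) (hδ : 0 < δ) (hp : ∀ x, δ ≤ p x ∧ p x ≤ 1 - δ)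
    -- `p(X) = P(T=1|X)`:
    (hpcond : μ[T | MeasurableSpace.comap X inferInstance]
      =ᵐ[μ] fun ω => p (X ω))
    -- `m₁(X)` and `m₀(X)` are the conditional means of `Y` given `T = 1`, resp. `T = 0`:
    (hm1 : μ[(fun ω => T ω * Y ω) | MeasurableSpace.comap X inferInstance]
      =ᵐ[μ] fun ω => p (X ω) * m1 (X ω))
    (hm0 : μ[(fun ω => (1 - T ω) * Y ω) | MeasurableSpace.comap X inferInstance]
      =ᵐ[μ] fun ω => (1 - p (X ω)) * m0 (X ω))
    (τtp τep : Ω → ℝ)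
    (hτtp : τtp = fun ω =>
      (1 / p (X ω)) * T ω * Y ω - (1 / (1 - p (X ω))) * (1 - T ω) * Y ω)
    (hτep : τep = fun ω =>
      (1 / p (X ω)) * T ω * (Y ω - m1 (X ω))
        - (1 / (1 - p (X ω))) * (1 - T ω) * (Y ω - m0 (X ω))
        + m1 (X ω) - m0 (X ω)) :
    (μ[τtp | MeasurableSpace.comap X inferInstance]
      =ᵐ[μ] fun ω => m1 (X ω) - m0 (X ω)) ∧
    (μ[τep | MeasurableSpace.comap X inferInstance]
      =ᵐ[μ] fun ω => m1 (X ω) - m0 (X ω)) ∧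
    (∀ᵐ ω ∂μ,
      (μ[(fun ω' => (τep ω') ^ 2) | MeasurableSpace.comap X inferInstance]) ω
        ≤ (μ[(fun ω' => (τtp ω') ^ 2) | MeasurableSpace.comap X inferInstance]) ω) := by
  subst hτtp hτep
  have hXm : Measurable[MeasurableSpace.comap X inferInstance] X := comap_measurable X
  have model : BinaryTreatmentModel (MeasurableSpace.comap X inferInstance) μ T Y
      (fun ω => p (X ω)) (fun ω => m1 (X ω)) (fun ω => m0 (X ω)) :=
    { le := hX.comap_le
      aestronglyMeasurable_T := hT.aestronglyMeasurable
      binary := hTbin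
      memLp_Y := memLp_top_of_bound hY.aestronglyMeasurable M (ae_of_all _ hYbd)
      measurable_P := hpmeas.comp hXm
      measurable_M₁ := hm1meas.comp hXm
      measurable_M₀ := hm0meas.comp hXm
      exists_bound := ⟨δ, hδ, fun ω => hp (X ω)⟩
      condExp_T := hpcond
      condExp_T_mul_Y := hm1
      condExp_one_sub_T_mul_Y := hm0 }
  exact ⟨model.condExp_ipwScore, model.condExp_aipwScore, model.condExp_aipwScore_sq_le⟩
end

section
/- Under the setting of the previous statement, for any two measurable policies π, π': 𝒳 → {0,1}, E[(τ_ep·(π(X)-π'(X)) - E[τ_ep(π-π')])²] ≤ E[(τ_tp·(π(X)-π'(X)) - E[τ_tp(π-π')])²]; i.e., the increments of the centered efficient-score process have pointwise smaller variance than those of the true-propensity process. -/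
/-!
Conditioning on `X`, the second moment of `τ * d` for a bounded `σ(X)`-measurable `d` is
`∫ d² E[τ² | X]` and its mean is `∫ d E[τ | X]`. Equal conditional means make the means of the two
increments agree, and the ordered conditional second moments then order the variances.
-/

open MeasureTheory ProbabilityTheory

namespace MeasureTheory

variable {Ω : Type*} {m m₀ : MeasurableSpace Ω} {μ : Measure Ω}

lemma integral_mul_condExp_of_stronglyMeasurable_left (hm : m ≤ m₀) [SigmaFinite (μ.trim hm)]
    {f g : Ω → ℝ} (hg : StronglyMeasurable[m] g) (hgf : Integrable (g * f) μ)
    (hf : Integrable f μ) :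
    ∫ ω, g ω * μ[f | m] ω ∂μ = ∫ ω, g ω * f ω ∂μ := by
  calc ∫ ω, g ω * μ[f | m] ω ∂μ = ∫ ω, μ[g * f | m] ω ∂μ :=
        integral_congr_ae (condExp_mul_of_stronglyMeasurable_left hg hgf hf).symm
    _ = ∫ ω, g ω * f ω ∂μ := integral_condExp hm

variable [IsProbabilityMeasure μ]

lemma integral_sub_integral_mul_sq_eq (hm : m ≤ m₀) {f d : Ω → ℝ} {C : ℝ} (hf : MemLp f 2 μ)
    (hd : StronglyMeasurable[m] d) (hd_bdd : ∀ᵐ ω ∂μ, ‖d ω‖ ≤ C) :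
    ∫ ω, (f ω * d ω - ∫ ω', f ω' * d ω' ∂μ) ^ 2 ∂μ
      = ∫ ω, d ω ^ 2 * μ[fun ω' => f ω' ^ 2 | m] ω ∂μ - (∫ ω, d ω * μ[f | m] ω ∂μ) ^ 2 := by
  have hd_aesm : AEStronglyMeasurable d μ := (hd.mono hm).aestronglyMeasurable
  have hfd : MemLp (fun ω => f ω * d ω) 2 μ := (memLp_top_of_bound hd_aesm C hd_bdd).mul' hf
  have hd2_bdd : ∀ᵐ ω ∂μ, ‖d ω ^ 2‖ ≤ C ^ 2 := hd_bdd.mono fun ω h => by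
    rw [norm_pow]; exact pow_le_pow_left₀ (norm_nonneg _) h 2
  have h_mean : ∫ ω, d ω * μ[f | m] ω ∂μ = ∫ ω, f ω * d ω ∂μ := by
    simp_rw [mul_comm (f _)]
    exact integral_mul_condExp_of_stronglyMeasurable_left hm hd
      ((hf.integrable one_le_two).bdd_mul hd_aesm hd_bdd) (hf.integrable one_le_two)
  have h_sq : ∫ ω, d ω ^ 2 * μ[fun ω' => f ω' ^ 2 | m] ω ∂μ = ∫ ω, (f ω * d ω) ^ 2 ∂μ := by
    simp_rw [mul_pow, mul_comm (f _ ^ 2)]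
    exact integral_mul_condExp_of_stronglyMeasurable_left hm (hd.pow 2)
      (hf.integrable_sq.bdd_mul (hd_aesm.pow 2) hd2_bdd) hf.integrable_sq
  rw [h_mean, h_sq, ← variance_eq_integral hfd.aemeasurable, variance_eq_sub hfd]
  rfl

lemma integral_sub_integral_mul_sq_le (hm : m ≤ m₀) {f g d : Ω → ℝ} {C : ℝ}
    (hf : MemLp f 2 μ) (hg : MemLp g 2 μ) (hmean : μ[f | m] =ᵐ[μ] μ[g | m])
    (hsq : μ[fun ω => f ω ^ 2 | m] ≤ᵐ[μ] μ[fun ω => g ω ^ 2 | m])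
    (hd : StronglyMeasurable[m] d) (hd_bdd : ∀ᵐ ω ∂μ, ‖d ω‖ ≤ C) :
    ∫ ω, (f ω * d ω - ∫ ω', f ω' * d ω' ∂μ) ^ 2 ∂μ
      ≤ ∫ ω, (g ω * d ω - ∫ ω', g ω' * d ω' ∂μ) ^ 2 ∂μ := by
  have h_mean : ∫ ω, d ω * μ[f | m] ω ∂μ = ∫ ω, d ω * μ[g | m] ω ∂μ :=
    integral_congr_ae (hmean.mono fun ω h => congrArg (d ω * ·) h)
  rw [integral_sub_integral_mul_sq_eq hm hf hd hd_bdd,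
    integral_sub_integral_mul_sq_eq hm hg hd hd_bdd, h_mean]
  have hd2_aesm : AEStronglyMeasurable (fun ω => d ω ^ 2) μ :=
    ((hd.mono hm).aestronglyMeasurable).pow 2
  have hd2_bdd : ∀ᵐ ω ∂μ, ‖d ω ^ 2‖ ≤ C ^ 2 := hd_bdd.mono fun ω h => by
    rw [norm_pow]; exact pow_le_pow_left₀ (norm_nonneg _) h 2
  gcongr ?_ - _
  refine integral_mono_ae (integrable_condExp.bdd_mul hd2_aesm hd2_bdd)
    (integrable_condExp.bdd_mul hd2_aesm hd2_bdd) ?_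
  filter_upwards [hsq] with ω hω
  exact mul_le_mul_of_nonneg_left hω (sq_nonneg _)

end MeasureTheory

theorem increments_variance_comparison_general
    {Ω 𝒳 : Type*} [MeasurableSpace Ω] [MeasurableSpace 𝒳]
    (μ : Measure Ω) [IsProbabilityMeasure μ]
    (X : Ω → 𝒳) (hX : Measurable X)
    (τtp τep : Ω → ℝ)
    (hτtp2 : MemLp τtp 2 μ) (hτep2 : MemLp τep 2 μ)
    (hmean : μ[τtp | MeasurableSpace.comap X inferInstance]
      =ᵐ[μ] μ[τep | MeasurableSpace.comap X inferInstance])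
    (hvar : ∀ᵐ ω ∂μ,
      (μ[(fun ω' => (τep ω') ^ 2) | MeasurableSpace.comap X inferInstance]) ω
        ≤ (μ[(fun ω' => (τtp ω') ^ 2) | MeasurableSpace.comap X inferInstance]) ω)
    (π π' : 𝒳 → ℝ) (hπmeas : Measurable π) (hπ'meas : Measurable π')
    (hπbin : ∀ x, π x = 0 ∨ π x = 1) (hπ'bin : ∀ x, π' x = 0 ∨ π' x = 1) :
    ∫ ω, (τep ω * (π (X ω) - π' (X ω))
        - ∫ ω', τep ω' * (π (X ω') - π' (X ω')) ∂μ) ^ 2 ∂μ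
      ≤ ∫ ω, (τtp ω * (π (X ω) - π' (X ω))
        - ∫ ω', τtp ω' * (π (X ω') - π' (X ω')) ∂μ) ^ 2 ∂μ := by
  have hd : StronglyMeasurable[MeasurableSpace.comap X inferInstance]
      fun ω => π (X ω) - π' (X ω) :=
    ((hπmeas.sub hπ'meas).comp (comap_measurable X)).stronglyMeasurable
  have hd_bdd : ∀ ω, ‖π (X ω) - π' (X ω)‖ ≤ 1 := fun ω => by
    rcases hπbin (X ω) with h | h <;> rcases hπ'bin (X ω) with h' | h' <;> norm_num [h, h']
  exact integral_sub_integral_mul_sq_le hX.comap_le hτep2 hτtp2 hmean.symm hvar hd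
    (ae_of_all _ hd_bdd)

/-- If `τ_tp` and `τ_ep` have the same conditional mean given `X` and
`E[τ_ep² | X] ≤ E[τ_tp² | X]` a.s., then for any two binary-valued policies `π, π'` the
centered increments satisfy
`E[(τ_ep·(π(X)-π'(X)) - E[τ_ep(π-π')])²] ≤ E[(τ_tp·(π(X)-π'(X)) - E[τ_tp(π-π')])²]`. -/
theorem increments_variance_comparison
    {Ω 𝒳 : Type*} [MeasurableSpace Ω] [MeasurableSpace 𝒳]
    (μ : Measure Ω) [IsProbabilityMeasure μ]
    (X : Ω → 𝒳) (hX : Measurable X)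
    (τtp τep : Ω → ℝ) (hτtpmeas : Measurable τtp) (hτepmeas : Measurable τep)
    (hτtp2 : MemLp τtp 2 μ) (hτep2 : MemLp τep 2 μ)
    (hmean : μ[τtp | MeasurableSpace.comap X inferInstance]
      =ᵐ[μ] μ[τep | MeasurableSpace.comap X inferInstance])
    (hvar : ∀ᵐ ω ∂μ,
      (μ[(fun ω' => (τep ω') ^ 2) | MeasurableSpace.comap X inferInstance]) ω
        ≤ (μ[(fun ω' => (τtp ω') ^ 2) | MeasurableSpace.comap X inferInstance]) ω)
    (π π' : 𝒳 → ℝ) (hπmeas : Measurable π) (hπ'meas : Measurable π')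
    (hπbin : ∀ x, π x = 0 ∨ π x = 1) (hπ'bin : ∀ x, π' x = 0 ∨ π' x = 1) :
    ∫ ω, (τep ω * (π (X ω) - π' (X ω))
        - ∫ ω', τep ω' * (π (X ω') - π' (X ω')) ∂μ) ^ 2 ∂μ
      ≤ ∫ ω, (τtp ω * (π (X ω) - π' (X ω))
        - ∫ ω', τtp ω' * (π (X ω') - π' (X ω')) ∂μ) ^ 2 ∂μ :=
  increments_variance_comparison_general μ X hX τtp τep hτtp2 hτep2 hmean hvar π π' hπmeas hπ'meas
    hπbin hπ'bin
end

section
/- Let ω: 𝒯×𝒳 → ℝ be defined by ω(t,x) = 1/f(t|x) where f is the conditional density of T given X with respect to a σ-finite measure μ on 𝒯, bounded below by f̲ > 0. Then for all bounded measurable u: 𝒯 → ℝ and v: 𝒳 → ℝ, E[ω(T,X) u(T) v(X)] = (∫ u dμ) · E[v(X)]. Conversely, if a bounded measurable ω̃ satisfies this equation for all such u, v, then ω̃(T,X) = ω(T,X) almost surely. -/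
open MeasureTheory ProbabilityTheory

/-! Substituting `g = u v / f` into the defining identity of the conditional density cancels `f`,
which gives the balancing equations. Conversely, taking `u, v` to be indicators, the balancing
equations say that `ω̃` and `1/f` have the same integral over every rectangle against the joint law
of `(T, X)`; rectangles generate the product σ-algebra, so the two agree almost everywhere under
that law. -/

namespace MeasureTheory

variable {Ω α β E : Type*} [MeasurableSpace Ω] [MeasurableSpace α] [MeasurableSpace β]
  [NormedAddCommGroup E] [NormedSpace ℝ E] [CompleteSpace E]

theorem ae_eq_of_setIntegral_prod_eq {μ : Measure (α × β)} {f g : α × β → E}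
    (hf : Integrable f μ) (hg : Integrable g μ)
    (h : ∀ ⦃s : Set α⦄, MeasurableSet s → ∀ ⦃t : Set β⦄, MeasurableSet t →
      ∫ z in s ×ˢ t, f z ∂μ = ∫ z in s ×ˢ t, g z ∂μ) :
    f =ᵐ[μ] g := by
  refine hf.ae_eq_of_withDensityᵥ_eq hg <|
    VectorMeasure.ext_of_generateFrom _ ?_ generateFrom_prod.symm isPiSystem_prod ?_
  · rintro _ ⟨s, hs, t, ht, rfl⟩
    rw [withDensityᵥ_apply hf (hs.prod ht), withDensityᵥ_apply hg (hs.prod ht), h hs ht]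
  · rw [withDensityᵥ_apply hf .univ, withDensityᵥ_apply hg .univ, ← Set.univ_prod_univ,
      h .univ .univ]

theorem ae_eq_comp_of_setIntegral_preimage_prod_eq {μ : Measure Ω} {W : Ω → α × β}
    (hW : Measurable W) {f g : α × β → E}
    (hf : Integrable f (μ.map W)) (hg : Integrable g (μ.map W))
    (h : ∀ ⦃s : Set α⦄, MeasurableSet s → ∀ ⦃t : Set β⦄, MeasurableSet t →
      ∫ ω in W ⁻¹' (s ×ˢ t), f (W ω) ∂μ = ∫ ω in W ⁻¹' (s ×ˢ t), g (W ω) ∂μ) :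
    ∀ᵐ ω ∂μ, f (W ω) = g (W ω) := by
  refine ae_of_ae_map hW.aemeasurable (ae_eq_of_setIntegral_prod_eq hf hg fun s hs t ht => ?_)
  rw [setIntegral_map (hs.prod ht) hf.1 hW.aemeasurable,
    setIntegral_map (hs.prod ht) hg.1 hW.aemeasurable]
  exact h hs ht

theorem integral_mul_indicator_mul_indicator {μ : Measure Ω} {Y : Ω → α} {Z : Ω → β}
    (hY : Measurable Y) (hZ : Measurable Z) (g : Ω → ℝ) {s : Set α} {t : Set β}
    (hs : MeasurableSet s) (ht : MeasurableSet t) :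
    ∫ ω, g ω * s.indicator 1 (Y ω) * t.indicator 1 (Z ω) ∂μ
      = ∫ ω in (fun ω => (Y ω, Z ω)) ⁻¹' (s ×ˢ t), g ω ∂μ := by
  rw [← integral_indicator ((hY.prodMk hZ) (hs.prod ht))]
  congr 1 with ω
  by_cases hYs : Y ω ∈ s <;> by_cases hZt : Z ω ∈ t <;> simp [Set.indicator, hYs, hZt]

end MeasureTheory

theorem abs_indicator_one_le {γ : Type*} (r : Set γ) (a : γ) :
    |r.indicator (1 : γ → ℝ) a| ≤ 1 := by
  simpa using norm_indicator_le_norm_self (s := r) (1 : γ → ℝ) a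

theorem abs_one_div_le_one_div {a b : ℝ} (ha : 0 < a) (hab : a ≤ b) : |1 / b| ≤ 1 / a := by
  rw [abs_of_pos (one_div_pos.mpr (ha.trans_le hab))]
  exact one_div_le_one_div_of_le ha hab

theorem integral_one_div_density_mul_mul {Ω 𝒯 𝒳 : Type*} [MeasurableSpace Ω]
    [MeasurableSpace 𝒯] [MeasurableSpace 𝒳] {μ : Measure Ω} {ν : Measure 𝒯}
    {T : Ω → 𝒯} {X : Ω → 𝒳} {f : 𝒯 → 𝒳 → ℝ} (hf : Measurable (Function.uncurry f))
    {fbar : ℝ} (hfbar : 0 < fbar) (hflb : ∀ t x, fbar ≤ f t x)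
    (hdens : ∀ g : 𝒯 → 𝒳 → ℝ, Measurable (Function.uncurry g) →
      (∃ C, ∀ t x, |g t x| ≤ C) →
      ∫ ω, g (T ω) (X ω) ∂μ = ∫ ω, ∫ t, g t (X ω) * f t (X ω) ∂ν ∂μ)
    (u : 𝒯 → ℝ) (v : 𝒳 → ℝ) (hu : Measurable u) (hv : Measurable v)
    (hub : ∃ Cu, ∀ t, |u t| ≤ Cu) (hvb : ∃ Cv, ∀ x, |v x| ≤ Cv) :
    ∫ ω, 1 / f (T ω) (X ω) * u (T ω) * v (X ω) ∂μ = (∫ t, u t ∂ν) * ∫ ω, v (X ω) ∂μ := by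
  obtain ⟨Cu, hCu⟩ := hub
  obtain ⟨Cv, hCv⟩ := hvb
  have hbdd : ∃ C, ∀ t x, |1 / f t x * u t * v x| ≤ C := by
    refine ⟨1 / fbar * Cu * Cv, fun t x => ?_⟩
    rw [abs_mul, abs_mul]
    have hCu0 : 0 ≤ Cu := (abs_nonneg _).trans (hCu t)
    have := abs_one_div_le_one_div hfbar (hflb t x)
    gcongr
    exacts [hCu t, hCv x]
  have hmeas : Measurable (Function.uncurry fun t x => 1 / f t x * u t * v x) :=
    ((measurable_const.div hf).mul (hu.comp measurable_fst)).mul (hv.comp measurable_snd)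
  have hcancel : ∀ x, ∫ t, 1 / f t x * u t * v x * f t x ∂ν = (∫ t, u t ∂ν) * v x := by
    intro x
    rw [← integral_mul_const]
    congr 1 with t
    field_simp [(hfbar.trans_le (hflb t x)).ne']
  rw [hdens _ hmeas hbdd]
  simp only [hcancel]
  exact integral_const_mul _ _

theorem stabilized_weight_balancing_characterization_general
    {Ω 𝒯 𝒳 : Type*} [MeasurableSpace Ω] [MeasurableSpace 𝒯] [MeasurableSpace 𝒳]
    (μ : Measure Ω) [IsProbabilityMeasure μ]
    (ν : Measure 𝒯)
    (T : Ω → 𝒯) (X : Ω → 𝒳) (hT : Measurable T) (hX : Measurable X)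
    (f : 𝒯 → 𝒳 → ℝ) (hf : Measurable (Function.uncurry f))
    (fbar : ℝ) (hfbar : 0 < fbar) (hflb : ∀ t x, fbar ≤ f t x)
    -- `f(·|x)` is the conditional density of `T` given `X` with respect to `ν`:
    (hdens : ∀ g : 𝒯 → 𝒳 → ℝ, Measurable (Function.uncurry g) →
      (∃ C, ∀ t x, |g t x| ≤ C) →
      ∫ ω, g (T ω) (X ω) ∂μ = ∫ ω, ∫ t, g t (X ω) * f t (X ω) ∂ν ∂μ) :
    (∀ (u : 𝒯 → ℝ) (v : 𝒳 → ℝ), Measurable u → Measurable v →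
      (∃ Cu, ∀ t, |u t| ≤ Cu) → (∃ Cv, ∀ x, |v x| ≤ Cv) →
      ∫ ω, (1 / f (T ω) (X ω)) * u (T ω) * v (X ω) ∂μ
        = (∫ t, u t ∂ν) * ∫ ω, v (X ω) ∂μ) ∧
    (∀ ωtilde : 𝒯 → 𝒳 → ℝ, Measurable (Function.uncurry ωtilde) →
      (∃ C, ∀ t x, |ωtilde t x| ≤ C) →
      (∀ (u : 𝒯 → ℝ) (v : 𝒳 → ℝ), Measurable u → Measurable v →
        (∃ Cu, ∀ t, |u t| ≤ Cu) → (∃ Cv, ∀ x, |v x| ≤ Cv) →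
        ∫ ω, ωtilde (T ω) (X ω) * u (T ω) * v (X ω) ∂μ
          = (∫ t, u t ∂ν) * ∫ ω, v (X ω) ∂μ) →
      ∀ᵐ ω ∂μ, ωtilde (T ω) (X ω) = 1 / f (T ω) (X ω)) := by
  have hbal := integral_one_div_density_mul_mul hf hfbar hflb hdens
  refine ⟨hbal, fun ωtilde hωtilde ⟨C, hC⟩ hωbal => ?_⟩
  refine ae_eq_comp_of_setIntegral_preimage_prod_eq (f := Function.uncurry ωtilde)
    (g := Function.uncurry fun t x => 1 / f t x) (hT.prodMk hX) ?_ ?_ fun s hs t ht => ?_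
  · exact .of_bound hωtilde.aestronglyMeasurable C (ae_of_all _ fun z => hC z.1 z.2)
  · exact .of_bound (measurable_const.div hf).aestronglyMeasurable (1 / fbar)
      (ae_of_all _ fun z => abs_one_div_le_one_div hfbar (hflb z.1 z.2))
  · have hu : Measurable (s.indicator (1 : 𝒯 → ℝ)) := measurable_const.indicator hs
    have hv : Measurable (t.indicator (1 : 𝒳 → ℝ)) := measurable_const.indicator ht
    rw [← integral_mul_indicator_mul_indicator hT hX _ hs ht,
      ← integral_mul_indicator_mul_indicator hT hX _ hs ht]
    simp only [Function.uncurry_apply_pair]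
    have hsb : ∃ Cu, ∀ a, |s.indicator 1 a| ≤ Cu := ⟨1, abs_indicator_one_le s⟩
    have htb : ∃ Cv, ∀ b, |t.indicator 1 b| ≤ Cv := ⟨1, abs_indicator_one_le t⟩
    rw [hωbal _ _ hu hv hsb htb, hbal _ _ hu hv hsb htb]

/-- Balancing characterization of the stabilized weight `ω(t,x) = 1/f(t|x)`: it satisfies
`E[ω(T,X)u(T)v(X)] = (∫ u dν)·E[v(X)]` for all bounded measurable `u, v`; conversely, any
bounded measurable `ω̃` satisfying these equations agrees with `ω(T,X)` almost surely. -/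
theorem stabilized_weight_balancing_characterization
    {Ω 𝒯 𝒳 : Type*} [MeasurableSpace Ω] [MeasurableSpace 𝒯] [MeasurableSpace 𝒳]
    (μ : Measure Ω) [IsProbabilityMeasure μ]
    (ν : Measure 𝒯) [IsFiniteMeasure ν]
    (T : Ω → 𝒯) (X : Ω → 𝒳) (hT : Measurable T) (hX : Measurable X)
    (f : 𝒯 → 𝒳 → ℝ) (hf : Measurable (Function.uncurry f))
    (fbar : ℝ) (hfbar : 0 < fbar) (hflb : ∀ t x, fbar ≤ f t x)
    -- `f(·|x)` is a probability density with respect to `ν` for each `x`: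
    (hfdens : ∀ x, ∫ t, f t x ∂ν = 1)
    -- `f(·|x)` is the conditional density of `T` given `X` with respect to `ν`:
    (hdens : ∀ g : 𝒯 → 𝒳 → ℝ, Measurable (Function.uncurry g) →
      (∃ C, ∀ t x, |g t x| ≤ C) →
      ∫ ω, g (T ω) (X ω) ∂μ = ∫ ω, ∫ t, g t (X ω) * f t (X ω) ∂ν ∂μ) :
    (∀ (u : 𝒯 → ℝ) (v : 𝒳 → ℝ), Measurable u → Measurable v →
      (∃ Cu, ∀ t, |u t| ≤ Cu) → (∃ Cv, ∀ x, |v x| ≤ Cv) →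
      ∫ ω, (1 / f (T ω) (X ω)) * u (T ω) * v (X ω) ∂μ
        = (∫ t, u t ∂ν) * ∫ ω, v (X ω) ∂μ) ∧
    (∀ ωtilde : 𝒯 → 𝒳 → ℝ, Measurable (Function.uncurry ωtilde) →
      (∃ C, ∀ t x, |ωtilde t x| ≤ C) →
      (∀ (u : 𝒯 → ℝ) (v : 𝒳 → ℝ), Measurable u → Measurable v →
        (∃ Cu, ∀ t, |u t| ≤ Cu) → (∃ Cv, ∀ x, |v x| ≤ Cv) →
        ∫ ω, ωtilde (T ω) (X ω) * u (T ω) * v (X ω) ∂μ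
          = (∫ t, u t ∂ν) * ∫ ω, v (X ω) ∂μ) →
      ∀ᵐ ω ∂μ, ωtilde (T ω) (X ω) = 1 / f (T ω) (X ω)) :=
  stabilized_weight_balancing_characterization_general μ ν T X hT hX f hf fbar hfbar hflb hdens
end
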